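/- Let Π be the rank-k orthogonal projector onto the span of eigenvectors u₁,...,u_k of a symmetric matrix Σ with eigenvalues λ₁ ≥ ... ≥ λ_p, and let X be any element of the Fantope F^k with complement X^⊥ = I − X. Then ⟨Σ, Π − X⟩ ≥ λ_k ⟨Π, X^⊥⟩ − λ_{k+1} ⟨Π^⊥, X⟩, where Π^⊥ = I − Π. -/

import Mathlib

/-!
Write `a i = u i ⬝ᵥ X *ᵥ u i`; since `0 ⪯ X ⪯ 1` and the `u i` are unit vectors, `0 ≤ a i ≤ 1`.
In the eigenbasis all three pairings are linear in `a`: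
`⟨Σ, Π - X⟩ = ∑_{i<k} l i (1 - a i) - ∑_{i≥k} l i a i`, `⟨Π, 1 - X⟩ = ∑_{i<k} (1 - a i)` and
`⟨1 - Π, X⟩ = ∑_{i≥k} a i`. The inequality then holds term by term, because `l i ≥ l (k - 1)`
on the first block and `l i ≤ l k` on the second (indices start at `0`).
-/

open Matrix BigOperators Finset

noncomputable def fip {p : ℕ} (A B : Matrix (Fin p) (Fin p) ℝ) : ℝ := (Aᵀ * B).trace

noncomputable def fnorm {p : ℕ} (A : Matrix (Fin p) (Fin p) ℝ) : ℝ :=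
  Real.sqrt (∑ i, ∑ j, (A i j) ^ 2)

def Fantope {p : ℕ} (k : ℕ) (X : Matrix (Fin p) (Fin p) ℝ) : Prop :=
  X.IsSymm ∧ X.PosSemidef ∧ (1 - X).PosSemidef ∧ X.trace = (k : ℝ)

/-- The orthogonal projector onto the span of the top-`k` eigenvectors. -/
def topProj {p : ℕ} (k : ℕ) (u : Fin p → Fin p → ℝ) : Matrix (Fin p) (Fin p) ℝ :=
  ∑ i ∈ Finset.univ.filter (fun i : Fin p => (i : ℕ) < k), vecMulVec (u i) (u i)

section TraceInner

variable {p : ℕ}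

lemma fip_sum_left {ι : Type*} (s : Finset ι) (A : ι → Matrix (Fin p) (Fin p) ℝ)
    (B : Matrix (Fin p) (Fin p) ℝ) : fip (∑ i ∈ s, A i) B = ∑ i ∈ s, fip (A i) B := by
  simp only [fip, transpose_sum, Finset.sum_mul, trace_sum]

lemma fip_smul_left (c : ℝ) (A B : Matrix (Fin p) (Fin p) ℝ) :
    fip (c • A) B = c * fip A B := by
  simp only [fip, transpose_smul, smul_mul, trace_smul, smul_eq_mul]

lemma fip_vecMulVec_self (v : Fin p → ℝ) (M : Matrix (Fin p) (Fin p) ℝ) :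
    fip (vecMulVec v v) M = v ⬝ᵥ M *ᵥ v := by
  rw [fip, transpose_vecMulVec, vecMulVec_mul, trace_vecMulVec, dotProduct_comm,
    dotProduct_mulVec]

end TraceInner

lemma sum_vecMulVec_self_eq_one {n R : Type*} [Fintype n] [DecidableEq n] [CommRing R]
    {u : n → n → R} (horth : ∀ i j, u i ⬝ᵥ u j = if i = j then 1 else 0) :
    ∑ i, vecMulVec (u i) (u i) = 1 := by
  have hrows : of u * (of u)ᵀ = 1 := by
    ext i j
    simpa [mul_apply, one_apply, dotProduct] using horth i j
  have hcols := congrFun₂ (mul_eq_one_comm.mp hrows : (of u)ᵀ * of u = 1)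
  ext i j
  simpa [mul_apply, vecMulVec_apply, Matrix.sum_apply, one_apply] using hcols i j

lemma dotProduct_mulVec_le_of_posSemidef_one_sub {n : Type*} [Fintype n] [DecidableEq n]
    {X : Matrix n n ℝ} (hX : (1 - X).PosSemidef) (v : n → ℝ) :
    v ⬝ᵥ X *ᵥ v ≤ v ⬝ᵥ v := by
  have := hX.dotProduct_mulVec_nonneg v
  rw [star_trivial, sub_mulVec, one_mulVec, dotProduct_sub] at this
  linarith

section TopProj

variable {p k : ℕ} {u : Fin p → Fin p → ℝ}

lemma topProj_mulVec (horth : ∀ i j, u i ⬝ᵥ u j = if i = j then (1 : ℝ) else 0) (i : Fin p) :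
    topProj k u *ᵥ u i = if (i : ℕ) < k then u i else 0 := by
  simp [topProj, sum_mulVec, vecMulVec_mulVec, horth]

lemma one_sub_topProj (horth : ∀ i j, u i ⬝ᵥ u j = if i = j then (1 : ℝ) else 0) :
    1 - topProj k u = ∑ i ∈ univ.filter (fun i : Fin p => k ≤ (i : ℕ)), vecMulVec (u i) (u i) := by
  rw [← sum_vecMulVec_self_eq_one horth, topProj,
    ← sum_filter_add_sum_filter_not univ (fun i : Fin p => (i : ℕ) < k)]
  simp

lemma fip_sum_smul_vecMulVec_topProj_sub
    (horth : ∀ i j, u i ⬝ᵥ u j = if i = j then (1 : ℝ) else 0) (l : Fin p → ℝ)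
    (X : Matrix (Fin p) (Fin p) ℝ) :
    fip (∑ i, l i • vecMulVec (u i) (u i)) (topProj k u - X) =
      ∑ i ∈ univ.filter (fun i : Fin p => (i : ℕ) < k), l i * (1 - u i ⬝ᵥ X *ᵥ u i) -
        ∑ i ∈ univ.filter (fun i : Fin p => k ≤ (i : ℕ)), l i * (u i ⬝ᵥ X *ᵥ u i) := by
  rw [fip_sum_left, ← sum_filter_add_sum_filter_not univ (fun i : Fin p => (i : ℕ) < k),
    sub_eq_add_neg (∑ i ∈ _, _), ← sum_neg_distrib]
  simp only [fip_smul_left, fip_vecMulVec_self, sub_mulVec, dotProduct_sub, topProj_mulVec horth]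
  congr 1
  · refine sum_congr rfl fun i hi => ?_
    rw [if_pos (mem_filter.mp hi).2, horth, if_pos rfl]
  · refine sum_congr (by ext; simp) fun i hi => ?_
    rw [if_neg (not_lt.mpr (mem_filter.mp hi).2), dotProduct_zero, zero_sub, mul_neg]

lemma fip_topProj_one_sub (horth : ∀ i j, u i ⬝ᵥ u j = if i = j then (1 : ℝ) else 0)
    (X : Matrix (Fin p) (Fin p) ℝ) :
    fip (topProj k u) (1 - X) =
      ∑ i ∈ univ.filter (fun i : Fin p => (i : ℕ) < k), (1 - u i ⬝ᵥ X *ᵥ u i) := by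
  simp only [topProj, fip_sum_left, fip_vecMulVec_self, sub_mulVec, one_mulVec, dotProduct_sub,
    horth, if_true]

lemma fip_one_sub_topProj (horth : ∀ i j, u i ⬝ᵥ u j = if i = j then (1 : ℝ) else 0)
    (X : Matrix (Fin p) (Fin p) ℝ) :
    fip (1 - topProj k u) X =
      ∑ i ∈ univ.filter (fun i : Fin p => k ≤ (i : ℕ)), u i ⬝ᵥ X *ᵥ u i := by
  simp only [one_sub_topProj horth, fip_sum_left, fip_vecMulVec_self]

end TopProj

lemma mul_sum_sub_mul_sum_le {ι : Type*} (s t : Finset ι) (l b c : ι → ℝ) {α β : ℝ}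
    (hs : ∀ i ∈ s, α ≤ l i ∧ 0 ≤ b i) (ht : ∀ i ∈ t, l i ≤ β ∧ 0 ≤ c i) :
    α * ∑ i ∈ s, b i - β * ∑ i ∈ t, c i ≤ ∑ i ∈ s, l i * b i - ∑ i ∈ t, l i * c i := by
  rw [mul_sum, mul_sum]
  exact sub_le_sub
    (sum_le_sum fun i hi => mul_le_mul_of_nonneg_right (hs i hi).1 (hs i hi).2)
    (sum_le_sum fun i hi => mul_le_mul_of_nonneg_right (ht i hi).1 (ht i hi).2)

/-- with Π the rank-k projector onto the top-k eigenspace of Σ and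
X ∈ F^k, ⟨Σ, Π − X⟩ ≥ λ_k ⟨Π, I − X⟩ − λ_{k+1} ⟨I − Π, X⟩. -/
theorem inner_sub_ge_eigen_combination (p k : ℕ) (hkp : k < p)
    (Sig : Matrix (Fin p) (Fin p) ℝ) (l : Fin p → ℝ) (u : Fin p → Fin p → ℝ)
    (hdecomp : Sig = ∑ i, l i • vecMulVec (u i) (u i))
    (horth : ∀ i j, u i ⬝ᵥ u j = if i = j then (1 : ℝ) else 0)
    (hl : Antitone l)
    (X : Matrix (Fin p) (Fin p) ℝ) (hX : Fantope k X) :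
    fip Sig (topProj k u - X) ≥
      l ⟨k - 1, by omega⟩ * fip (topProj k u) (1 - X) -
        l ⟨k, hkp⟩ * fip (1 - topProj k u) X := by
  obtain ⟨-, hX_nonneg, hX_le_one, -⟩ := hX
  rw [ge_iff_le, hdecomp, fip_sum_smul_vecMulVec_topProj_sub horth, fip_topProj_one_sub horth,
    fip_one_sub_topProj horth]
  apply mul_sum_sub_mul_sum_le
  · intro i hi
    have hunit : u i ⬝ᵥ u i = 1 := by simpa using horth i i
    exact ⟨hl (Fin.mk_le_mk.mpr (Nat.le_pred_of_lt (mem_filter.mp hi).2)),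
      sub_nonneg.mpr ((dotProduct_mulVec_le_of_posSemidef_one_sub hX_le_one _).trans_eq hunit)⟩
  · intro i hi
    exact ⟨hl (Fin.mk_le_mk.mpr (mem_filter.mp hi).2),
      by simpa using hX_nonneg.dotProduct_mulVec_nonneg (u i)⟩
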